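/- For any finite graph G and any set A of edges of G, bn(G - A) ≤ (|A| + 1) · bn(G), where G - A denotes the graph obtained from G by deleting the edges in A. -/

import Mathlib

variable {V : Type*} [Fintype V] [DecidableEq V]

/-- An F2-cycle relative to an edge set `E`: a finite set of edges, all belonging to `E`,
in which every vertex has even degree. -/
def IsF2CycleIn (E : Set (Sym2 V)) (C : Finset (Sym2 V)) : Prop :=
  (∀ e ∈ C, e ∈ E) ∧ ∀ v : V, Even ((C.filter (fun e => v ∈ e)).card)

/-- `B` generates the cycle space of the graph with edge set `E`: every F2-cycle is a
symmetric difference of a subfamily of `B`. -/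
def GeneratesIn (E : Set (Sym2 V)) (B : List (Finset (Sym2 V))) : Prop :=
  ∀ C : Finset (Sym2 V), IsF2CycleIn E C →
    ∃ l : List (Finset (Sym2 V)), l.Sublist B ∧ C = l.foldr symmDiff ∅

/-- The basis number of the graph with edge set `E`: the least `k` such that some
family of F2-cycles generating the cycle space uses each edge at most `k` times. -/
noncomputable def bnSet (E : Set (Sym2 V)) : ℕ :=
  sInf {k | ∃ B : List (Finset (Sym2 V)), (∀ X ∈ B, IsF2CycleIn E X) ∧
    GeneratesIn E B ∧ ∀ e : Sym2 V, B.countP (fun X => decide (e ∈ X)) ≤ k}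

/-- The basis number of a graph. -/
noncomputable def SimpleGraph.bn (G : SimpleGraph V) : ℕ := bnSet G.edgeSet

/-!
Fix a family `b 0, …, b (n - 1)` of cycles generating the cycle space of `G` with congestion
`bn G`, and let `q j ∈ 𝔽₂^A` be the restriction of `b j` to `A`. The symmetric difference of the
`b j`, `j ∈ S`, avoids `A` exactly when `∑ j ∈ S, q j = 0`, and every cycle of `G - A` arises this
way. So it suffices to generate the kernel of `S ↦ ∑ j ∈ S, q j` by index sets in which every
index occurs at most `|A| + 1` times: each edge then lies in at most `(|A| + 1) · bn G` of the
resulting cycles.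

Such a family is built greedily. Scan `m = 0, 1, …`, keeping a set of indices whose `q`-values form
a basis of the `q i`, `i < m`. If `q m` is the sum over `S ⊆ basis`, record `{m} ∪ S` and swap `m`
into the basis for the index of `S` used most often so far. With `d = |A|`, the invariant "at most
`d + 1 - x` basis indices are used `x` or more times" survives the swap, and an index that leaves
the basis is never used again.
-/

open Finset symmDiff
open scoped List

section SubsetSums

variable {ι M : Type*} [AddCommMonoid M]

def SumIndependent (q : ι → M) (s : Finset ι) : Prop :=
  ∀ t ⊆ s, ∑ i ∈ t, q i = 0 → t = ∅

def IsSubsetSum (q : ι → M) (s : Finset ι) (v : M) : Prop :=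
  ∃ t ⊆ s, ∑ i ∈ t, q i = v

variable {q : ι → M}

theorem isSubsetSum_self {s : Finset ι} {i : ι} (hi : i ∈ s) : IsSubsetSum q s (q i) :=
  ⟨{i}, singleton_subset_iff.2 hi, sum_singleton _ _⟩

theorem IsSubsetSum.mono {s s' : Finset ι} {v : M} (h : IsSubsetSum q s v) (hs : s ⊆ s') :
    IsSubsetSum q s' v :=
  let ⟨t, ht, hv⟩ := h
  ⟨t, ht.trans hs, hv⟩

end SubsetSums

section CharTwo

variable {ι M : Type*} [DecidableEq ι] [AddCommGroup M] [Module (ZMod 2) M] {q : ι → M}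

theorem sum_symmDiff (q : ι → M) (s t : Finset ι) :
    ∑ i ∈ s ∆ t, q i = ∑ i ∈ s, q i + ∑ i ∈ t, q i := by
  have hunion : ∑ i ∈ s ∆ t, q i + ∑ i ∈ s ∩ t, q i = ∑ i ∈ s ∪ t, q i := by
    rw [symmDiff_eq_sup_sdiff_inf]
    exact sum_sdiff (inter_subset_left.trans subset_union_left)
  rw [← sum_union_inter, ← hunion, add_assoc, ZModModule.add_self, add_zero]

theorem eq_sum_erase_of_sum_eq_zero {t : Finset ι} {i : ι} (hi : i ∈ t)
    (ht : ∑ j ∈ t, q j = 0) : q i = ∑ j ∈ t.erase i, q j := by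
  rw [← sum_erase_add _ _ hi, add_eq_zero_iff_eq_neg, ZModModule.neg_eq_self] at ht
  exact ht.symm

theorem SumIndependent.eq_of_sum_eq {s t t' : Finset ι} (h : SumIndependent q s) (ht : t ⊆ s)
    (ht' : t' ⊆ s) (heq : ∑ i ∈ t, q i = ∑ i ∈ t', q i) : t = t' := by
  refine symmDiff_eq_bot.mp (h _ (symmDiff_subset_union.trans (union_subset ht ht')) ?_)
  rw [sum_symmDiff, heq, ZModModule.add_self]

theorem SumIndependent.two_pow_card_le [Fintype M] {s : Finset ι} (h : SumIndependent q s) :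
    2 ^ #s ≤ Fintype.card M := by
  rw [← card_powerset]
  exact card_le_card_of_injOn (fun t => ∑ i ∈ t, q i) (fun _ _ => mem_coe.2 (mem_univ _))
    fun t ht t' ht' heq => h.eq_of_sum_eq (mem_powerset.1 ht) (mem_powerset.1 ht') heq

theorem IsSubsetSum.add {s : Finset ι} {v w : M} (hv : IsSubsetSum q s v)
    (hw : IsSubsetSum q s w) : IsSubsetSum q s (v + w) := by
  obtain ⟨t, ht, rfl⟩ := hv
  obtain ⟨t', ht', rfl⟩ := hw
  exact ⟨t ∆ t', symmDiff_subset_union.trans (union_subset ht ht'), sum_symmDiff q t t'⟩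

theorem isSubsetSum_sum {s t : Finset ι} (h : ∀ i ∈ t, IsSubsetSum q s (q i)) :
    IsSubsetSum q s (∑ i ∈ t, q i) := by
  induction t using Finset.induction_on with
  | empty => exact ⟨∅, empty_subset _, rfl⟩
  | insert i t hi ih =>
    rw [sum_insert hi]
    exact (h i (mem_insert_self i t)).add (ih fun j hj => h j (mem_insert_of_mem hj))

theorem IsSubsetSum.trans {s s' : Finset ι} {v : M} (hv : IsSubsetSum q s v)
    (hs : ∀ i ∈ s, IsSubsetSum q s' (q i)) : IsSubsetSum q s' v := by
  obtain ⟨t, ht, rfl⟩ := hv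
  exact isSubsetSum_sum fun i hi => hs i (ht hi)

end CharTwo

theorem SumIndependent.card_le_card {ι κ : Type*} [DecidableEq ι] [Fintype κ] [DecidableEq κ]
    {q : ι → κ → ZMod 2} {s : Finset ι} (h : SumIndependent q s) : #s ≤ Fintype.card κ := by
  have := h.two_pow_card_le
  rw [Fintype.card_fun, ZMod.card] at this
  exact (Nat.pow_le_pow_iff_right one_lt_two).1 this

section Exchange

def load (out : List (Finset ℕ)) (j : ℕ) : ℕ := out.countP (j ∈ ·)

theorem load_cons (T : Finset ℕ) (out : List (Finset ℕ)) (j : ℕ) :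
    load (T :: out) j = load out j + if j ∈ T then 1 else 0 := by
  simp [load, List.countP_cons]

variable {M : Type*} [AddCommMonoid M] (q : ℕ → M) (d : ℕ)

structure IsKernelFamily (m : ℕ) (out : List (Finset ℕ)) : Prop where
  subset_range : ∀ T ∈ out, T ⊆ range m
  sum_eq_zero : ∀ T ∈ out, ∑ j ∈ T, q j = 0
  generates : ∀ S ⊆ range m, ∑ j ∈ S, q j = 0 →
    ∃ l : List (Finset ℕ), l <+ out ∧ S = l.foldr (· ∆ ·) ∅

structure ExchangeState (m : ℕ) (out : List (Finset ℕ)) (basis : Finset ℕ) : Prop where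
  kernelFamily : IsKernelFamily q m out
  basis_subset : basis ⊆ range m
  independent : SumIndependent q basis
  spans : ∀ i < m, IsSubsetSum q basis (q i)
  -- `d + 1 - x` truncates: no basis index has load above `d`
  card_heavy_le : ∀ x, #{j ∈ basis | x ≤ load out j} ≤ d + 1 - x
  load_le_of_notMem : ∀ j ∉ basis, load out j ≤ d + 1

variable {q d} {m : ℕ} {out : List (Finset ℕ)} {B : Finset ℕ}

namespace ExchangeState

theorem load_le_of_mem (h : ExchangeState q d m out B) {j : ℕ} (hj : j ∈ B) :
    load out j ≤ d := by
  have hpos : 0 < #{i ∈ B | load out j ≤ load out i} := card_pos.2 ⟨j, mem_filter.2 ⟨hj, le_rfl⟩⟩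
  have := h.card_heavy_le (load out j)
  omega

theorem load_le (h : ExchangeState q d m out B) (j : ℕ) : load out j ≤ d + 1 := by
  by_cases hj : j ∈ B
  · exact (h.load_le_of_mem hj).trans d.le_succ
  · exact h.load_le_of_notMem j hj

theorem load_self (h : ExchangeState q d m out B) : load out m = 0 :=
  List.countP_eq_zero.2 fun T hT hmT =>
    lt_irrefl m (mem_range.1 (h.kernelFamily.subset_range T hT (of_decide_eq_true hmT)))

theorem self_notMem (h : ExchangeState q d m out B) : m ∉ B :=
  fun hm => lt_irrefl m (mem_range.1 (h.basis_subset hm))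

end ExchangeState

theorem exchangeState_zero : ExchangeState q d 0 [] ∅ where
  kernelFamily :=
    { subset_range := by simp
      sum_eq_zero := by simp
      generates := fun S hS _ => ⟨[], List.nil_sublist _, by simpa using hS⟩ }
  basis_subset := empty_subset _
  independent _ ht _ := subset_empty.1 ht
  spans := by simp
  card_heavy_le := by simp
  load_le_of_notMem := by simp [load]

end Exchange

section ExchangeStep

variable {M : Type*} [AddCommGroup M] [Module (ZMod 2) M] {q : ℕ → M} {d m : ℕ}
  {out : List (Finset ℕ)} {B S : Finset ℕ}

theorem subset_range_of_notMem (hS : S ⊆ range (m + 1)) (hm : m ∉ S) : S ⊆ range m :=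
  (subset_insert_iff_of_notMem hm).1 (range_add_one ▸ hS)

theorem SumIndependent.insert_of_not_isSubsetSum {i : ℕ} (hB : SumIndependent q B)
    (hi : ¬ IsSubsetSum q B (q i)) : SumIndependent q (insert i B) := by
  intro t ht hsum
  by_cases hit : i ∈ t
  · exact absurd ⟨t.erase i, subset_insert_iff.1 ht, (eq_sum_erase_of_sum_eq_zero hit hsum).symm⟩ hi
  · exact hB t ((subset_insert_iff_of_notMem hit).1 ht) hsum

theorem SumIndependent.exchange {js : ℕ} (hB : SumIndependent q B) (hSB : S ⊆ B)
    (hSm : ∑ j ∈ S, q j = q m) (hjs : js ∈ S) : SumIndependent q (insert m (B.erase js)) := by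
  intro t ht hsum
  by_cases hmt : m ∈ t
  · have hsub : t.erase m ⊆ B.erase js := subset_insert_iff.1 ht
    have heq : t.erase m = S := hB.eq_of_sum_eq (hsub.trans (erase_subset js B)) hSB
      (by rw [← eq_sum_erase_of_sum_eq_zero hmt hsum, hSm])
    exact absurd (hsub (heq ▸ hjs)) (notMem_erase js B)
  · exact hB t (((subset_insert_iff_of_notMem hmt).1 ht).trans (erase_subset js B)) hsum

theorem isSubsetSum_exchange {js : ℕ} (hSB : S ⊆ B) (hSm : ∑ j ∈ S, q j = q m) (hjs : js ∈ S)
    {i : ℕ} (hi : i ∈ B) : IsSubsetSum q (insert m (B.erase js)) (q i) := by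
  by_cases hijs : i = js
  · subst hijs
    have hqi : q i = q m + ∑ j ∈ S.erase i, q j := by
      rw [← hSm, ← add_sum_erase S q hjs, add_assoc, ZModModule.add_self, add_zero]
    rw [hqi]
    exact (isSubsetSum_self (mem_insert_self m _)).add
      ⟨S.erase i, (erase_subset_erase i hSB).trans (subset_insert m _), rfl⟩
  · exact isSubsetSum_self (mem_insert_of_mem (mem_erase.2 ⟨hijs, hi⟩))

namespace IsKernelFamily

theorem cons {T : Finset ℕ} (h : IsKernelFamily q m out) (hT : T ⊆ range (m + 1))
    (hmT : m ∈ T) (hTsum : ∑ j ∈ T, q j = 0) : IsKernelFamily q (m + 1) (T :: out) where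
  subset_range := List.forall_mem_cons.2
    ⟨hT, fun T' hT' => (h.subset_range T' hT').trans (range_subset_range.2 m.le_succ)⟩
  sum_eq_zero := List.forall_mem_cons.2 ⟨hTsum, h.sum_eq_zero⟩
  generates S hS hSsum := by
    by_cases hmS : m ∈ S
    · have hST : S ∆ T ⊆ range m := by
        refine subset_range_of_notMem (symmDiff_subset_union.trans (union_subset hS hT)) ?_
        simp [mem_symmDiff, hmS, hmT]
      obtain ⟨l, hl, hfold⟩ :=
        h.generates (S ∆ T) hST (by rw [sum_symmDiff, hSsum, hTsum, add_zero])
      refine ⟨T :: l, hl.cons_cons T, ?_⟩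
      rw [List.foldr_cons, ← hfold, symmDiff_comm S, symmDiff_symmDiff_cancel_left]
    · obtain ⟨l, hl, hfold⟩ := h.generates S (subset_range_of_notMem hS hmS) hSsum
      exact ⟨l, hl.cons T, hfold⟩

theorem cons_insert (h : IsKernelFamily q m out) (hS : S ⊆ range m) (hSm : ∑ j ∈ S, q j = q m) :
    IsKernelFamily q (m + 1) (insert m S :: out) := by
  have hmS : m ∉ S := fun hm => lt_irrefl m (mem_range.1 (hS hm))
  refine h.cons ?_ (mem_insert_self m S) (by rw [sum_insert hmS, hSm, ZModModule.add_self])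
  rw [range_add_one]
  exact insert_subset_insert m hS

theorem succ_of_not_isSubsetSum (h : IsKernelFamily q m out)
    (hspan : ∀ i < m, IsSubsetSum q B (q i)) (hm : ¬ IsSubsetSum q B (q m)) :
    IsKernelFamily q (m + 1) out where
  subset_range T hT := (h.subset_range T hT).trans (range_subset_range.2 m.le_succ)
  sum_eq_zero := h.sum_eq_zero
  generates S hS hSsum := by
    refine h.generates S (subset_range_of_notMem hS fun hmS => hm ?_) hSsum
    refine IsSubsetSum.trans ⟨S.erase m, ?_, (eq_sum_erase_of_sum_eq_zero hmS hSsum).symm⟩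
      fun i hi => hspan i (mem_range.1 hi)
    exact subset_range_of_notMem ((erase_subset m S).trans hS) (notMem_erase m S)

end IsKernelFamily

theorem card_heavy_exchange {B S : Finset ℕ} {out : List (Finset ℕ)} {m js d x : ℕ}
    (hS : S ⊆ B) (hjs : js ∈ S) (hmax : ∀ j ∈ S, load out j ≤ load out js)
    (hm : load out m = 0) (hmB : m ∉ B)
    (hheavy : ∀ x, #{j ∈ B | x ≤ load out j} ≤ d + 1 - x) (hx : 2 ≤ x) :
    #{j ∈ insert m (B.erase js) | x ≤ load (insert m S :: out) j} ≤ d + 1 - x := by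
  -- Either `js` counts at threshold `x - 1` and its removal pays for the indices of `S` reaching
  -- load `x`, or no index of `S` reaches load `x` at all.
  by_cases hjs' : x - 1 ≤ load out js
  · calc #{j ∈ insert m (B.erase js) | x ≤ load (insert m S :: out) j}
        ≤ #({j ∈ B | x - 1 ≤ load out j}.erase js) := by
          refine card_le_card fun j hj => ?_
          simp only [mem_filter, mem_insert, mem_erase, load_cons] at hj ⊢
          grind
      _ = #{j ∈ B | x - 1 ≤ load out j} - 1 := card_erase_of_mem (mem_filter.2 ⟨hS hjs, hjs'⟩)
      _ ≤ d + 1 - x := by have := hheavy (x - 1); omega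
  · calc #{j ∈ insert m (B.erase js) | x ≤ load (insert m S :: out) j}
        ≤ #{j ∈ B | x ≤ load out j} := by
          refine card_le_card fun j hj => ?_
          simp only [mem_filter, mem_insert, mem_erase, load_cons] at hj ⊢
          grind
      _ ≤ d + 1 - x := hheavy x

namespace ExchangeState

theorem succ_of_not_isSubsetSum (h : ExchangeState q d m out B)
    (hm : ¬ IsSubsetSum q B (q m)) (hdim : ∀ s, SumIndependent q s → #s ≤ d) :
    ExchangeState q d (m + 1) out (insert m B) where
  kernelFamily := h.kernelFamily.succ_of_not_isSubsetSum h.spans hm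
  basis_subset := range_add_one ▸ insert_subset_insert m h.basis_subset
  independent := h.independent.insert_of_not_isSubsetSum hm
  spans i hi := by
    rcases Nat.lt_succ_iff_lt_or_eq.1 hi with hi | rfl
    · exact (h.spans i hi).mono (subset_insert _ B)
    · exact isSubsetSum_self (mem_insert_self i B)
  card_heavy_le
    | 0 => by
      have := hdim _ (h.independent.insert_of_not_isSubsetSum hm)
      have := card_filter_le (insert m B) (0 ≤ load out ·)
      omega
    | x + 1 => by
      rw [filter_insert, if_neg (by simp [h.load_self])]
      exact h.card_heavy_le (x + 1)
  load_le_of_notMem j hj := h.load_le_of_notMem j fun hjB => hj (mem_insert_of_mem hjB)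

theorem succ_of_eq_zero (h : ExchangeState q d m out B) (hm : q m = 0) :
    ExchangeState q d (m + 1) ({m} :: out) B where
  kernelFamily := h.kernelFamily.cons (singleton_subset_iff.2 (self_mem_range_succ m))
    (mem_singleton_self m) (by rw [sum_singleton, hm])
  basis_subset := h.basis_subset.trans (range_subset_range.2 m.le_succ)
  independent := h.independent
  spans i hi := by
    rcases Nat.lt_succ_iff_lt_or_eq.1 hi with hi | rfl
    · exact h.spans i hi
    · exact ⟨∅, empty_subset B, by rw [sum_empty, hm]⟩
  card_heavy_le x := by
    have hload : ∀ j ∈ B, load ({m} :: out) j = load out j := fun j hj => by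
      have hjm : j ≠ m := fun hjm => h.self_notMem (hjm ▸ hj)
      simp [load_cons, hjm]
    rw [filter_congr fun j hj => by rw [hload j hj]]
    exact h.card_heavy_le x
  load_le_of_notMem j hj := by
    rw [load_cons]
    split_ifs with hjm
    · rw [mem_singleton.1 hjm, h.load_self]
      omega
    · exact h.load_le_of_notMem j hj

theorem succ_exchange {js : ℕ} (h : ExchangeState q d m out B) (hSB : S ⊆ B)
    (hSm : ∑ j ∈ S, q j = q m) (hjs : js ∈ S) (hmax : ∀ j ∈ S, load out j ≤ load out js)
    (hdim : ∀ s, SumIndependent q s → #s ≤ d) :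
    ExchangeState q d (m + 1) (insert m S :: out) (insert m (B.erase js)) where
  kernelFamily := h.kernelFamily.cons_insert (hSB.trans h.basis_subset) hSm
  basis_subset := range_add_one ▸ insert_subset_insert m ((erase_subset js B).trans h.basis_subset)
  independent := h.independent.exchange hSB hSm hjs
  spans i hi := by
    rcases Nat.lt_succ_iff_lt_or_eq.1 hi with hi | rfl
    · exact (h.spans i hi).trans fun j hj => isSubsetSum_exchange hSB hSm hjs hj
    · exact isSubsetSum_self (mem_insert_self i _)
  card_heavy_le x := by
    by_cases hx : 2 ≤ x
    · exact card_heavy_exchange hSB hjs hmax h.load_self h.self_notMem h.card_heavy_le hx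
    · have hcard : #(insert m (B.erase js)) = #B := by
        rw [card_insert_of_notMem fun hm => h.self_notMem (mem_of_mem_erase hm),
          card_erase_of_mem (hSB hjs), Nat.sub_add_cancel (card_pos.2 ⟨js, hSB hjs⟩)]
      have := hdim B h.independent
      have := card_filter_le (insert m (B.erase js)) (x ≤ load (insert m S :: out) ·)
      omega
  load_le_of_notMem j hj := by
    by_cases hjjs : j = js
    · subst hjjs
      have := h.load_le_of_mem (hSB hjs)
      rw [load_cons]
      split_ifs <;> omega
    · have hjB : j ∉ B := fun hjB => hj (mem_insert_of_mem (mem_erase.2 ⟨hjjs, hjB⟩))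
      have hjT : j ∉ insert m S := by
        rw [mem_insert, not_or]
        exact ⟨fun hjm => hj (mem_insert.2 (Or.inl hjm)), fun hjS => hjB (hSB hjS)⟩
      rw [load_cons, if_neg hjT, add_zero]
      exact h.load_le_of_notMem j hjB

end ExchangeState

theorem exists_exchangeState (hdim : ∀ s, SumIndependent q s → #s ≤ d) (m : ℕ) :
    ∃ out B, ExchangeState q d m out B := by
  induction m with
  | zero => exact ⟨[], ∅, exchangeState_zero⟩
  | succ m ih =>
    obtain ⟨out, B, h⟩ := ih
    by_cases hm : IsSubsetSum q B (q m)
    · obtain ⟨S, hSB, hSm⟩ := hm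
      rcases S.eq_empty_or_nonempty with rfl | hS
      · exact ⟨_, _, h.succ_of_eq_zero (hSm.symm.trans sum_empty)⟩
      · obtain ⟨js, hjs, hmax⟩ := exists_max_image S (load out) hS
        exact ⟨_, _, h.succ_exchange hSB hSm hjs hmax hdim⟩
    · exact ⟨_, _, h.succ_of_not_isSubsetSum hm hdim⟩

theorem exists_kernelFamily_load_le (hdim : ∀ s, SumIndependent q s → #s ≤ d) (m : ℕ) :
    ∃ out, IsKernelFamily q m out ∧ ∀ j, load out j ≤ d + 1 :=
  let ⟨out, _, h⟩ := exists_exchangeState hdim m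
  ⟨out, h.kernelFamily, h.load_le⟩

end ExchangeStep

section SymmDiffSum

variable {ι γ : Type*} [DecidableEq γ]

def charVec (X : Finset γ) (e : γ) : ZMod 2 := if e ∈ X then 1 else 0

theorem charVec_eq_zero_iff {X : Finset γ} {e : γ} : charVec X e = 0 ↔ e ∉ X := by
  simp [charVec]

theorem charVec_symmDiff (X Y : Finset γ) : charVec (X ∆ Y) = charVec X + charVec Y := by
  funext e
  by_cases hX : e ∈ X <;> by_cases hY : e ∈ Y <;> simp [charVec, mem_symmDiff, hX, hY]
  decide

theorem charVec_injective : Function.Injective (charVec (γ := γ)) := by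
  intro X Y h
  ext e
  have he := congrFun h e
  by_cases hX : e ∈ X <;> by_cases hY : e ∈ Y <;> simp_all [charVec]

def symmDiffSum (b : ι → Finset γ) (T : Finset ι) : Finset γ := T.fold (· ∆ ·) ∅ b

variable [DecidableEq ι] (b : ι → Finset γ)

theorem charVec_symmDiffSum (T : Finset ι) :
    charVec (symmDiffSum b T) = ∑ j ∈ T, charVec (b j) := by
  induction T using Finset.induction_on with
  | empty => funext e; simp [symmDiffSum, charVec]
  | insert j T hj ih =>
    rw [symmDiffSum, fold_insert hj, sum_insert hj, charVec_symmDiff, ← ih]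
    rfl

theorem symmDiffSum_symmDiff (S T : Finset ι) :
    symmDiffSum b (S ∆ T) = symmDiffSum b S ∆ symmDiffSum b T :=
  charVec_injective <| by
    rw [charVec_symmDiff, charVec_symmDiffSum, charVec_symmDiffSum, charVec_symmDiffSum,
      sum_symmDiff]

theorem symmDiffSum_foldr (l : List (Finset ι)) :
    symmDiffSum b (l.foldr (· ∆ ·) ∅) = (l.map (symmDiffSum b)).foldr (· ∆ ·) ∅ := by
  induction l with
  | nil => rfl
  | cons T l ih => rw [List.foldr_cons, symmDiffSum_symmDiff, ih]; rfl

theorem exists_mem_of_mem_symmDiffSum {T : Finset ι} {e : γ} (he : e ∈ symmDiffSum b T) :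
    ∃ j ∈ T, e ∈ b j := by
  by_contra! hT
  have := congrFun (charVec_symmDiffSum b T) e
  rw [Finset.sum_apply, sum_eq_zero fun j hj => charVec_eq_zero_iff.2 (hT j hj)] at this
  exact charVec_eq_zero_iff.1 this he

theorem sum_charVec_restrict_eq_zero_iff (A : Finset γ) (T : Finset ι) :
    ∑ j ∈ T, (fun a : A => charVec (b j) a) = 0 ↔ ∀ a ∈ A, a ∉ symmDiffSum b T := by
  simp only [funext_iff, Finset.sum_apply, Pi.zero_apply, Subtype.forall]
  refine forall₂_congr fun a _ => ?_
  rw [← Finset.sum_apply, ← charVec_symmDiffSum, charVec_eq_zero_iff]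

end SymmDiffSum

section Lists

variable {α : Type*}

theorem exists_symmDiffSum_getD_eq_foldr [DecidableEq α] {B l : List (Finset α)} (h : l <+ B) :
    ∃ S ⊆ range B.length, symmDiffSum (B.getD · ∅) S = l.foldr (· ∆ ·) ∅ := by
  induction h with
  | slnil => exact ⟨∅, empty_subset _, rfl⟩
  | cons X _ ih =>
    obtain ⟨S, hS, hSl⟩ := ih
    refine ⟨S.map (addRightEmbedding 1), ?_, ?_⟩
    · intro j hj
      obtain ⟨i, hi, rfl⟩ := mem_map.1 hj
      simpa using mem_range.1 (hS hi)
    · rw [symmDiffSum, fold_map]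
      exact hSl
  | cons_cons X _ ih =>
    obtain ⟨S, hS, hSl⟩ := ih
    refine ⟨insert 0 (S.map (addRightEmbedding 1)), ?_, ?_⟩
    · intro j hj
      rcases mem_insert.1 hj with rfl | hj
      · simp
      · obtain ⟨i, hi, rfl⟩ := mem_map.1 hj
        simpa using mem_range.1 (hS hi)
    · rw [symmDiffSum, fold_insert (by simp), fold_map]
      exact congrArg (X ∆ ·) hSl

theorem card_filter_range_getD (B : List α) (p : α → Prop) [DecidablePred p] (d : α) :
    #{j ∈ range B.length | p (B.getD j d)} = B.countP (p ·) := by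
  induction B with
  | nil => simp
  | cons X B ih =>
    rw [card_filter, List.length_cons, sum_range_succ', List.countP_cons, ← ih, card_filter]
    simp

theorem countP_le_sum_load {out : List (Finset ℕ)} {J : Finset ℕ} {p : Finset ℕ → Bool}
    (h : ∀ T ∈ out, p T → ∃ j ∈ J, j ∈ T) : out.countP p ≤ ∑ j ∈ J, load out j := by
  induction out with
  | nil => simp [load]
  | cons T out ih =>
    simp only [List.countP_cons, load_cons, sum_add_distrib]
    refine add_le_add (ih fun T' hT' => h T' (List.mem_cons_of_mem T hT')) ?_
    split_ifs with hT
    · obtain ⟨j, hj, hjT⟩ := h T List.mem_cons_self hT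
      rw [sum_boole]
      exact card_pos.2 ⟨j, mem_filter.2 ⟨hj, hjT⟩⟩
    · exact Nat.zero_le _

theorem countP_map_symmDiffSum_le {γ : Type*} [DecidableEq γ] {B : List (Finset γ)}
    {out : List (Finset ℕ)} {k : ℕ} (hout : ∀ T ∈ out, T ⊆ range B.length)
    (hload : ∀ j, load out j ≤ k) (e : γ) :
    (out.map (symmDiffSum (B.getD · ∅))).countP (e ∈ ·) ≤ k * B.countP (e ∈ ·) := by
  calc (out.map (symmDiffSum (B.getD · ∅))).countP (e ∈ ·)
      ≤ ∑ j ∈ range B.length with e ∈ B.getD j ∅, load out j := by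
        rw [List.countP_map]
        refine countP_le_sum_load fun T hT heT => ?_
        obtain ⟨j, hj, hej⟩ := exists_mem_of_mem_symmDiffSum _ (of_decide_eq_true heT)
        exact ⟨j, mem_filter.2 ⟨hout T hT hj, hej⟩, hj⟩
    _ ≤ #{j ∈ range B.length | e ∈ B.getD j ∅} * k := sum_le_card_nsmul _ _ _ fun j _ => hload j
    _ = k * B.countP (e ∈ ·) := by rw [card_filter_range_getD B (e ∈ ·) ∅, mul_comm]

end Lists

theorem even_card_symmDiff {α : Type*} [DecidableEq α] {s t : Finset α} (hs : Even #s)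
    (ht : Even #t) : Even #(s ∆ t) := by
  have hunion := card_union_add_card_inter s t
  have hsymm : #(s ∆ t) + #(s ∩ t) = #(s ∪ t) := by
    rw [symmDiff_eq_sup_sdiff_inf]
    exact card_sdiff_add_card_eq_card (inter_subset_left.trans subset_union_left)
  obtain ⟨a, ha⟩ := hs
  obtain ⟨b, hb⟩ := ht
  exact ⟨a + b - #(s ∩ t), by omega⟩

section CycleSpace

variable {α : Type*} [DecidableEq α] {E : Set (Sym2 α)} {X Y : Finset (Sym2 α)}

theorem IsF2CycleIn.mono {E' : Set (Sym2 α)} (h : IsF2CycleIn E X) (hE : E ⊆ E') :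
    IsF2CycleIn E' X :=
  ⟨fun e he => hE (h.1 e he), h.2⟩

theorem IsF2CycleIn.diff (h : IsF2CycleIn E X) (A : Finset (Sym2 α)) (hA : ∀ a ∈ A, a ∉ X) :
    IsF2CycleIn (E \ A) X :=
  ⟨fun e he => ⟨h.1 e he, fun heA => hA e heA he⟩, h.2⟩

theorem IsF2CycleIn.symmDiff (hX : IsF2CycleIn E X) (hY : IsF2CycleIn E Y) :
    IsF2CycleIn E (X ∆ Y) := by
  refine ⟨fun e he => (mem_symmDiff.1 he).elim (fun h => hX.1 e h.1) (fun h => hY.1 e h.1),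
    fun v => ?_⟩
  have hfilter : (X ∆ Y).filter (v ∈ ·) = X.filter (v ∈ ·) ∆ Y.filter (v ∈ ·) := by
    ext e
    simp only [mem_filter, mem_symmDiff]
    tauto
  rw [hfilter]
  exact even_card_symmDiff (hX.2 v) (hY.2 v)

theorem isF2CycleIn_symmDiffSum {ι : Type*} [DecidableEq ι] (b : ι → Finset (Sym2 α))
    {T : Finset ι} (hb : ∀ j ∈ T, IsF2CycleIn E (b j)) : IsF2CycleIn E (symmDiffSum b T) := by
  induction T using Finset.induction_on with
  | empty => exact ⟨by simp [symmDiffSum], by simp [symmDiffSum]⟩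
  | insert j T hj ih =>
    rw [symmDiffSum, fold_insert hj]
    exact (hb j (mem_insert_self j T)).symmDiff (ih fun i hi => hb i (mem_insert_of_mem hi))

end CycleSpace

theorem exists_cycle_family_congestion_le_bnSet (E : Set (Sym2 V)) :
    ∃ B : List (Finset (Sym2 V)), (∀ X ∈ B, IsF2CycleIn E X) ∧ GeneratesIn E B ∧
      ∀ e : Sym2 V, B.countP (fun X => decide (e ∈ X)) ≤ bnSet E := by
  classical
  have hmem : bnSet E ∈ _ := Nat.sInf_mem ⟨_, ({C | IsF2CycleIn E C} : Finset _).toList,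
    by simp, fun C hC => ⟨[C], List.singleton_sublist.2 (by simpa using hC), (symmDiff_bot C).symm⟩,
    fun e => List.countP_le_length⟩
  exact hmem

theorem bnSet_diff_le (E : Set (Sym2 V)) (A : Finset (Sym2 V)) :
    bnSet (E \ A) ≤ (#A + 1) * bnSet E := by
  obtain ⟨B, hBcyc, hBgen, hBcong⟩ := exists_cycle_family_congestion_le_bnSet E
  have hb : ∀ j ∈ range B.length, IsF2CycleIn E (B.getD j ∅) := fun j hj =>
    hBcyc _ (List.getD_eq_getElem B ∅ (mem_range.1 hj) ▸ List.getElem_mem _)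
  set b : ℕ → Finset (Sym2 V) := (B.getD · ∅)
  obtain ⟨out, hout, hload⟩ := exists_kernelFamily_load_le (q := fun j (a : A) => charVec (b j) a)
    (fun s hs => hs.card_le_card.trans_eq (Fintype.card_coe A)) B.length
  refine Nat.sInf_le ⟨out.map (symmDiffSum b), List.forall_mem_map.2 fun T hT => ?_,
    fun C hC => ?_, fun e => ?_⟩
  · exact (isF2CycleIn_symmDiffSum b fun j hj => hb j (hout.subset_range T hT hj)).diff A
      ((sum_charVec_restrict_eq_zero_iff b A T).1 (hout.sum_eq_zero T hT))
  · obtain ⟨l, hl, rfl⟩ := hBgen C (hC.mono Set.sdiff_subset)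
    obtain ⟨S, hS, hSl⟩ := exists_symmDiffSum_getD_eq_foldr hl
    obtain ⟨l', hl', rfl⟩ := hout.generates S hS ((sum_charVec_restrict_eq_zero_iff b A S).2
      fun a ha haS => (hC.1 a (hSl ▸ haS)).2 ha)
    exact ⟨l'.map (symmDiffSum b), hl'.map _, by rw [← hSl, symmDiffSum_foldr]⟩
  · exact (countP_map_symmDiffSum_le hout.subset_range hload e).trans
      (Nat.mul_le_mul_left _ (hBcong e))

/-- deleting a set `A` of edges multiplies the basis number by at most
`|A| + 1`: `bn(G - A) ≤ (|A| + 1) · bn(G)`. -/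
theorem bn_deleteEdges_le (G : SimpleGraph V) (A : Finset (Sym2 V)) :
    (G.deleteEdges (A : Set (Sym2 V))).bn ≤ (A.card + 1) * G.bn := by
  rw [SimpleGraph.bn, SimpleGraph.bn, SimpleGraph.edgeSet_deleteEdges]
  exact bnSet_diff_le G.edgeSet A
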